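/- For all n > 0 and for any family x₁,…,xₙ of booleans (identified with the integers 0 and 1), the following equality of integers holds: 2^{n-1} · (x₁ ∧ … ∧ xₙ) = Σ_{i=1}^{n} (−1)^{i−1} Σ_{K ∈ P(n,i)} (⊕_{k ∈ K} x_k), where P(n,i) is the set of all subsets of {1,…,n} of size exactly i. -/

import Mathlib

/-! With `σ k = (-1) ^ x k`, twice the parity of `x` on `K` is `1 - ∏ k ∈ K, σ k`. Collecting the
inner sums over all subsets `K`, twice the alternating sum becomes
`-∑ K, (-1) ^ #K * (1 - ∏ k ∈ K, σ k) = ∏ k, (1 - σ k) - ∑ K, (-1) ^ #K`,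
and the last sum vanishes for `n > 0` while `1 - σ k = 2 * x k`. -/

open Finset

section

variable {ι R : Type*}

theorem two_mul_ite_odd [Ring R] (m : ℕ) :
    (2 : R) * (if Odd m then 1 else 0) = 1 - (-1) ^ m := by
  rcases Nat.even_or_odd m with h | h
  · rw [if_neg (Nat.not_odd_iff_even.mpr h), h.neg_one_pow, mul_zero, sub_self]
  · rw [if_pos h, h.neg_one_pow, sub_neg_eq_add, mul_one, one_add_one_eq_two]

theorem prod_ite_neg_one_one [CommRing R] (s : Finset ι) (p : ι → Prop) [DecidablePred p] :
    ∏ k ∈ s, (if p k then (-1 : R) else 1) = (-1) ^ #(s.filter p) := by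
  rw [prod_ite, prod_const, prod_const_one, mul_one]

theorem two_mul_ite_odd_card_filter [CommRing R] (s : Finset ι) (p : ι → Prop) [DecidablePred p] :
    (2 : R) * (if Odd #(s.filter p) then 1 else 0) = 1 - ∏ k ∈ s, if p k then -1 else 1 := by
  rw [two_mul_ite_odd, prod_ite_neg_one_one]

theorem sum_Icc_neg_one_pow_mul_sum_powersetCard [CommRing R] (s : Finset ι)
    {f : Finset ι → R} (hf : f ∅ = 0) :
    ∑ i ∈ Icc 1 #s, (-1) ^ (i - 1) * ∑ K ∈ s.powersetCard i, f K =
      -∑ K ∈ s.powerset, (-1) ^ #K * f K := by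
  rw [sum_powerset, range_eq_Ico, sum_eq_sum_Ico_succ_bot (Nat.succ_pos _), powersetCard_zero,
    sum_singleton, hf, mul_zero, zero_add, ← sum_neg_distrib, zero_add, Nat.succ_eq_add_one,
    Ico_add_one_right_eq_Icc]
  refine sum_congr rfl fun i hi => ?_
  have hi : 1 ≤ i := (mem_Icc.mp hi).1
  rw [mul_sum, ← sum_neg_distrib]
  refine sum_congr rfl fun K hK => ?_
  rw [(mem_powersetCard.mp hK).2, ← neg_mul, ← Nat.sub_add_cancel hi, pow_succ]
  simp

theorem sum_powerset_neg_one_pow_card_mul_one_sub_prod {s : Finset ι} (hs : s.Nonempty)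
    (σ : ι → ℤ) :
    ∑ K ∈ s.powerset, (-1) ^ #K * (1 - ∏ k ∈ K, σ k) = -∏ k ∈ s, (1 - σ k) := by
  simp_rw [mul_sub, mul_one, sum_sub_distrib, sum_powerset_neg_one_pow_card_of_nonempty hs,
    ← prod_neg, sub_eq_add_neg, prod_one_add, zero_add]

end

/-- For all `n > 0` and any family of booleans `x : Fin n → Bool`
(identified with the integers 0 and 1), we have
`2^(n-1) · (x₁ ∧ … ∧ xₙ) = Σ_{i=1}^n (−1)^(i−1) Σ_{K ∈ P(n,i)} (⊕_{k∈K} x k)`,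
where `P(n,i)` is the collection of subsets of `{1,…,n}` of cardinality `i`, the
conjunction is the product of the `x k` as integers, and the parity `⊕_{k∈K} x k`
is identified with an integer in `{0,1}`. -/
theorem conjunction_fourier (n : ℕ) (hn : 0 < n) (x : Fin n → Bool) :
    (2 : ℤ) ^ (n - 1) * ∏ k : Fin n, (if x k then (1 : ℤ) else 0) =
      ∑ i ∈ Finset.Icc 1 n, (-1 : ℤ) ^ (i - 1) *
        ∑ K ∈ (Finset.univ : Finset (Fin n)).powersetCard i,
          (if Odd (K.filter (fun k => x k = true)).card then (1 : ℤ) else 0) := by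
  set σ : Fin n → ℤ := fun k => if x k then -1 else 1
  have huniv : (univ : Finset (Fin n)).Nonempty := univ_nonempty_iff.mpr ⟨⟨0, hn⟩⟩
  apply mul_left_cancel₀ (two_ne_zero' ℤ)
  calc 2 * (2 ^ (n - 1) * ∏ k, (if x k then 1 else 0))
      = ∏ k, (1 - σ k) := by
        have h_one_sub (k : Fin n) : 1 - σ k = 2 * if x k then 1 else 0 := by
          cases h : x k <;> norm_num [σ, h]
        rw [← mul_assoc, ← pow_succ', Nat.sub_add_cancel hn, prod_congr rfl fun k _ => h_one_sub k,
          prod_mul_distrib, prod_const, card_univ, Fintype.card_fin]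
    _ = -∑ K ∈ univ.powerset, (-1) ^ #K * (1 - ∏ k ∈ K, σ k) := by
        rw [sum_powerset_neg_one_pow_card_mul_one_sub_prod huniv, neg_neg]
    _ = ∑ i ∈ Icc 1 n, (-1) ^ (i - 1) * ∑ K ∈ univ.powersetCard i, (1 - ∏ k ∈ K, σ k) := by
        rw [← sum_Icc_neg_one_pow_mul_sum_powersetCard univ (by simp), card_univ, Fintype.card_fin]
    _ = _ := by
        simp_rw [mul_sum, mul_left_comm (2 : ℤ), two_mul_ite_odd_card_filter]
        rfl
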